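/- arXiv:1103.2933 — 3 statements merged into one kernel-verified Lean document; each statement's English description precedes it below -/
import Mathlib

section
/- Let U and V be vector spaces over a field K of characteristic zero, in duality via a bilinear form. Then a Laplace pairing on the joint tensor algebra T(U,V) = T(U) ⊗ T(V) compatible with the duality exists and is unique. Moreover, it is symmetric: (a | b) = (b | a) for all a, b ∈ T(U,V). -/
open TensorProduct

noncomputable section

variable (K : Type) [Field K] [CharZero K]
variable (U V : Type) [AddCommGroup U] [Module K U] [AddCommGroup V] [Module K V]

/-- The comultiplication of the tensor algebra, the algebra homomorphism with
`Δ(x) = 1 ⊗ x + x ⊗ 1` for `x ∈ U`. -/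
def TAcomul : TensorAlgebra K U →ₐ[K] TensorAlgebra K U ⊗[K] TensorAlgebra K U :=
  TensorAlgebra.lift K
    ((TensorProduct.mk K (TensorAlgebra K U) (TensorAlgebra K U) 1
      + (TensorProduct.mk K (TensorAlgebra K U) (TensorAlgebra K U)).flip 1) ∘ₗ TensorAlgebra.ι K)

/-- The joint tensor algebra `T(U,V) = T(U) ⊗ T(V)`. -/
abbrev JT := TensorAlgebra K U ⊗[K] TensorAlgebra K V

/-- The comultiplication of the joint tensor algebra (tensor product Hopf structure). -/
def JTcomul : JT K U V →ₗ[K] JT K U V ⊗[K] JT K U V :=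
  (TensorProduct.tensorTensorTensorComm K (TensorAlgebra K U) (TensorAlgebra K U)
      (TensorAlgebra K V) (TensorAlgebra K V)).toLinearMap ∘ₗ
    TensorProduct.map (TAcomul K U).toLinearMap (TAcomul K V).toLinearMap

/-- `a ↦ a ⊗ 1 : T(U) → T(U,V)`. -/
def inclU : TensorAlgebra K U →ₗ[K] JT K U V :=
  (TensorProduct.mk K (TensorAlgebra K U) (TensorAlgebra K V)).flip 1

/-- `b ↦ 1 ⊗ b : T(V) → T(U,V)`. -/
def inclV : TensorAlgebra K V →ₗ[K] JT K U V :=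
  TensorProduct.mk K (TensorAlgebra K U) (TensorAlgebra K V) 1

variable (B : U →ₗ[K] V →ₗ[K] K)

/-- A Laplace pairing on the joint tensor algebra `T(U,V)`, compatible with the duality `B`:
a symmetric bilinear form satisfying `(a | bc) = Σ (a₍₁₎ | b) (a₍₂₎ | c)` together with the
compatibility conditions on generators. -/
structure IsLaplacePairing (Lp : JT K U V →ₗ[K] JT K U V →ₗ[K] K) : Prop where
  symm : ∀ a b, Lp a b = Lp b a
  split : ∀ a b c, Lp a (b * c)
    = TensorProduct.lift ((LinearMap.mul K K).compl₁₂ (Lp.flip b) (Lp.flip c)) (JTcomul K U V a)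
  unit_unit : Lp 1 1 = 1
  vu : ∀ (x : U) (y : V),
    Lp (inclV K U V (TensorAlgebra.ι K y)) (inclU K U V (TensorAlgebra.ι K x)) = B x y
  uv : ∀ (x : U) (y : V),
    Lp (inclU K U V (TensorAlgebra.ι K x)) (inclV K U V (TensorAlgebra.ι K y)) = B x y
  uu : ∀ x₁ x₂ : U,
    Lp (inclU K U V (TensorAlgebra.ι K x₁)) (inclU K U V (TensorAlgebra.ι K x₂)) = 0
  vv : ∀ y₁ y₂ : V,
    Lp (inclV K U V (TensorAlgebra.ι K y₁)) (inclV K U V (TensorAlgebra.ι K y₂)) = 0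
  u_one : ∀ x : U, Lp (inclU K U V (TensorAlgebra.ι K x)) 1 = 0
  one_u : ∀ x : U, Lp 1 (inclU K U V (TensorAlgebra.ι K x)) = 0
  one_v : ∀ y : V, Lp 1 (inclV K U V (TensorAlgebra.ι K y)) = 0
  v_one : ∀ y : V, Lp (inclV K U V (TensorAlgebra.ι K y)) 1 = 0

/-!
Extend the duality to `⟨·,·⟩ : T(U) × T(V) → K` by letting `u ↦ ⟨u, ·⟩` be the algebra map into
the convolution algebra `T(V)*` with `⟨x, ·⟩ = ⟨x, π₁ ·⟩` for `x ∈ U`, where `π₁` is the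
projection to degree one. It is then also multiplicative in the second variable,
`⟨u, c d⟩ = Σ ⟨u₁, c⟩ ⟨u₂, d⟩`: both sides are algebra maps `T(U) → (T(V) ⊗ T(V))*` in `u`,
and they agree on generators because `π₁` satisfies the Leibniz rule
`π₁(c d) = ε(c) π₁(d) + π₁(c) ε(d)`. The pairing `(u ⊗ v | u' ⊗ v') = ⟨u', v⟩ ⟨u, v'⟩` is
symmetric by construction, and the Laplace identity follows from these two multiplicativity
properties.

For uniqueness, the Laplace identity determines the values of `(1 | ·)`, then of `(g | ·)` for a
generator `g ∈ U ∪ V` (a derivation), and finally of `(· | b)`, on a product `b c` from their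
values on `b` and on `c`. As `T(U,V)` is generated by `U ∪ V`, all three are fixed by the
prescribed values on generators.
-/

open Coalgebra WithConv

namespace LinearMap

variable {R : Type*} [CommSemiring R]

theorem eq_of_adjoin_eq_top {A M : Type*} [Semiring A] [Algebra R A] [AddCommMonoid M]
    [Module R M] {s : Set A} (hs : Algebra.adjoin R s = ⊤) {f g : A →ₗ[R] M}
    (one : f 1 = g 1) (mem : ∀ x ∈ s, f x = g x)
    (mul : ∀ a b, f a = g a → f b = g b → f (a * b) = g (a * b)) : f = g := by
  ext a
  have ha : a ∈ Algebra.adjoin R s := hs ▸ Algebra.mem_top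
  induction ha using Algebra.adjoin_induction with
  | mem x hx => exact mem x hx
  | algebraMap r => rw [Algebra.algebraMap_eq_smul_one, map_smul, map_smul, one]
  | add a b _ _ ha hb => rw [map_add, map_add, ha, hb]
  | mul a b _ _ ha hb => exact mul a b ha hb

section Convolution

variable {A C D : Type*} [AddCommMonoid C] [Module R C] [Coalgebra R C]
  [AddCommMonoid D] [Module R D] [Coalgebra R D]

theorem convMul_apply_eq_lift (f g : C →ₗ[R] R) (c : C) :
    (toConv f * toConv g) c = TensorProduct.lift ((LinearMap.mul R R).compl₁₂ f g) (comul c) := by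
  rw [convMul_apply]
  exact LinearMap.congr_fun (TensorProduct.lift_comp_map (LinearMap.mul R R) f g) (comul c)

def convCompCoalgHom [Semiring A] [Algebra R A] (g : C →ₗc[R] D) :
    WithConv (D →ₗ[R] A) →ₐ[R] WithConv (C →ₗ[R] A) :=
  AlgHom.ofLinearMap
    ((WithConv.linearEquiv R _).symm.toLinearMap ∘ₗ LinearMap.lcomp R A g.toLinearMap ∘ₗ
      (WithConv.linearEquiv R _).toLinearMap)
    (by ext; simp)
    (fun f f' ↦ congrArg toConv (convMul_comp_coalgHom_distrib f f' g))

@[simp]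
theorem convCompCoalgHom_apply [Semiring A] [Algebra R A] (g : C →ₗc[R] D)
    (f : WithConv (D →ₗ[R] A)) (c : C) : convCompCoalgHom g f c = f (g c) :=
  rfl

variable (R C D) in
def convDualDistrib :
    WithConv (C →ₗ[R] R) ⊗[R] WithConv (D →ₗ[R] R) →ₐ[R] WithConv (C ⊗[R] D →ₗ[R] R) :=
  Algebra.TensorProduct.algHomOfLinearMapTensorProduct
    ((WithConv.linearEquiv R _).symm.toLinearMap ∘ₗ TensorProduct.dualDistrib R C D ∘ₗ
      TensorProduct.map (WithConv.linearEquiv R _).toLinearMap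
        (WithConv.linearEquiv R _).toLinearMap)
    (fun f f' g g' ↦ by
      have dualDistrib_eq (f : C →ₗ[R] R) (g : D →ₗ[R] R) :
          TensorProduct.dualDistrib R C D (f ⊗ₜ g) = mul' R R ∘ₗ TensorProduct.map f g := by
        ext; simp [TensorProduct.dualDistrib_apply]
      simp only [coe_comp, LinearEquiv.coe_coe, Function.comp_apply, TensorProduct.map_tmul,
        linearEquiv_apply, dualDistrib_eq, symm_linearEquiv_apply]
      rw [← ofConv_toConv (TensorProduct.map (f * f').ofConv (g * g').ofConv),
        ← TensorProduct.map_convMul_map, ← Algebra.TensorProduct.lmul'_toLinearMap,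
        algHom_comp_convMul_distrib])
    (by ext; simp [TensorProduct.dualDistrib_apply, mul_comm])

@[simp]
theorem convDualDistrib_tmul_apply (f : WithConv (C →ₗ[R] R)) (g : WithConv (D →ₗ[R] R))
    (c : C) (d : D) : convDualDistrib R C D (f ⊗ₜ g) (c ⊗ₜ d) = f c * g d :=
  rfl

end Convolution

end LinearMap

theorem Algebra.TensorProduct.adjoin_image_includeLeft_union_eq_top {R A C : Type*}
    [CommSemiring R] [Semiring A] [Algebra R A] [Semiring C] [Algebra R C] {s : Set A} {t : Set C}
    (hs : Algebra.adjoin R s = ⊤) (ht : Algebra.adjoin R t = ⊤) :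
    Algebra.adjoin R (includeLeft (S := R) '' s ∪ includeRight (R := R) '' t) = ⊤ := by
  rw [_root_.eq_top_iff, ← Algebra.range_id, ← map_id, map_range, AlgHom.comp_id, AlgHom.comp_id,
    ← Algebra.map_top, ← Algebra.map_top, ← hs, ← ht, AlgHom.map_adjoin, AlgHom.map_adjoin]
  exact sup_le (Algebra.adjoin_mono Set.subset_union_left)
    (Algebra.adjoin_mono Set.subset_union_right)

namespace TensorAlgebra

variable {R : Type*} [CommSemiring R] {M : Type*} [AddCommMonoid M] [Module R M]

@[simp]
theorem algebraMapInv_ι (x : M) : algebraMapInv (ι R x) = 0 :=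
  lift_ι_apply 0 x

@[simp]
theorem ιInv_ι (x : M) : ιInv (ι R x) = x :=
  ι_leftInverse x

-- The next two proofs restore the instances `ιInv` is defined with, so that it unfolds to
-- `TrivSqZeroExt.snd ∘ toTrivSqZeroExt`.
@[simp]
theorem ιInv_one : ιInv (1 : TensorAlgebra R M) = 0 := by
  let : Module Rᵐᵒᵖ M := Module.compHom _ ((RingHom.id R).fromOpposite mul_comm)
  have : IsCentralScalar R M := ⟨fun _ _ ↦ rfl⟩
  exact congrArg TrivSqZeroExt.snd (map_one toTrivSqZeroExt)

theorem ιInv_mul (a b : TensorAlgebra R M) :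
    ιInv (a * b) = algebraMapInv a • ιInv b + algebraMapInv b • ιInv a := by
  let : Module Rᵐᵒᵖ M := Module.compHom _ ((RingHom.id R).fromOpposite mul_comm)
  have : IsCentralScalar R M := ⟨fun _ _ ↦ rfl⟩
  have fst_toTrivSqZeroExt :
      (TrivSqZeroExt.fstHom R R M).comp toTrivSqZeroExt = algebraMapInv := by
    ext; simp [algebraMapInv]
  have h := TrivSqZeroExt.snd_mul (toTrivSqZeroExt a) (toTrivSqZeroExt b)
  rw [← map_mul] at h
  simp only [← TrivSqZeroExt.fstHom_apply (S := R), ← AlgHom.comp_apply,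
    fst_toTrivSqZeroExt] at h
  exact h

variable (R M) in
instance instBialgebra : Bialgebra R (TensorAlgebra R M) :=
  .ofAlgHom
    (lift R ((TensorProduct.mk R _ _ 1 + (TensorProduct.mk R _ _).flip 1) ∘ₗ ι R))
    algebraMapInv
    (by ext x; simp [Algebra.TensorProduct.one_def, add_tmul, tmul_add]; abel)
    (by ext x; simp)
    (by ext x; simp)

@[simp]
theorem comul_ι (x : M) : comul (R := R) (ι R x) = 1 ⊗ₜ[R] ι R x + ι R x ⊗ₜ[R] 1 :=
  lift_ι_apply _ x

@[simp]
theorem counit_apply (a : TensorAlgebra R M) : counit (R := R) a = algebraMapInv a :=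
  rfl

section Pairing

variable {N κ : Type*} [AddCommMonoid N] [Module R N] (p : M →ₗ[R] N →ₗ[R] R)

-- On monomials, `hopfPairing p (x₁ ⋯ xₙ) (y₁ ⋯ yₘ)` is the permanent of `(p xᵢ yⱼ)` if `n = m`
-- and `0` otherwise.
def hopfPairing : TensorAlgebra R M →ₐ[R] WithConv (TensorAlgebra R N →ₗ[R] R) :=
  lift R ((WithConv.linearEquiv R _).symm.toLinearMap ∘ₗ p.compl₂ ιInv)

@[simp]
theorem hopfPairing_ι_apply (x : M) (c : TensorAlgebra R N) :
    hopfPairing p (ι R x) c = p x (ιInv c) := by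
  simp [hopfPairing]

theorem hopfPairing_mul_apply (u u' : TensorAlgebra R M) {c : TensorAlgebra R N}
    (𝓡 : Repr R c κ) :
    hopfPairing p (u * u') c
      = ∑ i ∈ 𝓡.index, hopfPairing p u (𝓡.left i) * hopfPairing p u' (𝓡.right i) := by
  rw [map_mul, 𝓡.convMul_apply]

theorem hopfPairing_apply_mul {u : TensorAlgebra R M} (𝓡 : Repr R u κ)
    (c d : TensorAlgebra R N) :
    hopfPairing p u (c * d)
      = ∑ i ∈ 𝓡.index, hopfPairing p (𝓡.left i) c * hopfPairing p (𝓡.right i) d := by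
  have algHom_eq : (LinearMap.convCompCoalgHom (Bialgebra.mulCoalgHom R (TensorAlgebra R N))).comp
        (hopfPairing p)
      = (LinearMap.convDualDistrib R _ _).comp
          ((Algebra.TensorProduct.map (hopfPairing p) (hopfPairing p)).comp
            (Bialgebra.comulAlgHom R _)) := by
    ext x : 2
    refine WithConv.ext (TensorProduct.ext' fun c d ↦ ?_)
    simp [ιInv_mul, mul_comm]
  simpa [← 𝓡.eq] using congr($algHom_eq u (c ⊗ₜ d))

def laplacePairing :
    TensorAlgebra R M ⊗[R] TensorAlgebra R N →ₗ[R]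
      TensorAlgebra R M ⊗[R] TensorAlgebra R N →ₗ[R] R :=
  TensorProduct.dualDistrib R _ _ ∘ₗ (TensorProduct.comm R _ _).toLinearMap ∘ₗ
    TensorProduct.map ((WithConv.linearEquiv R _).toLinearMap ∘ₗ (hopfPairing p).toLinearMap)
      ((WithConv.linearEquiv R _).toLinearMap ∘ₗ (hopfPairing p).toLinearMap).flip

@[simp]
theorem laplacePairing_tmul_tmul (u u' : TensorAlgebra R M) (v v' : TensorAlgebra R N) :
    laplacePairing p (u ⊗ₜ v) (u' ⊗ₜ v') = hopfPairing p u' v * hopfPairing p u v' :=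
  rfl

theorem laplacePairing_comm (a b : TensorAlgebra R M ⊗[R] TensorAlgebra R N) :
    laplacePairing p a b = laplacePairing p b a := by
  suffices (laplacePairing p).flip = laplacePairing p from congr($this b a)
  refine TensorProduct.ext' fun u v ↦ TensorProduct.ext' fun u' v' ↦ ?_
  simp [mul_comm]

theorem laplacePairing_apply_mul (a b c : TensorAlgebra R M ⊗[R] TensorAlgebra R N) :
    laplacePairing p a (b * c)
      = (toConv ((laplacePairing p).flip b) * toConv ((laplacePairing p).flip c)) a := by
  induction b with
  | zero => simp
  | add b b' hb hb' => simp [add_mul, hb, hb']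
  | tmul u₁ v₁ =>
    induction c with
    | zero => simp
    | add c c' hc hc' => simp [mul_add, hc, hc']
    | tmul u₂ v₂ =>
      induction a with
      | zero => simp
      | add a a' ha ha' => simp only [map_add, LinearMap.add_apply, ha, ha']
      | tmul u v =>
        rw [Algebra.TensorProduct.tmul_mul_tmul, laplacePairing_tmul_tmul,
          ((ℛ R u).tmul (ℛ R v)).convMul_apply, hopfPairing_mul_apply p _ _ (ℛ R v),
          hopfPairing_apply_mul p (ℛ R u), Finset.sum_mul_sum, Finset.sum_comm]
        simp only [Repr.tmul_index, Repr.tmul_left, Repr.tmul_right, Finset.sum_product,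
          LinearMap.flip_apply, laplacePairing_tmul_tmul]
        exact Finset.sum_congr rfl fun _ _ ↦ Finset.sum_congr rfl fun _ _ ↦ by ring

end Pairing

end TensorAlgebra

section LaplacePairing

omit [CharZero K]

open TensorAlgebra

theorem JTcomul_eq_comul : JTcomul K U V = comul (R := K) :=
  rfl

theorem isLaplacePairing_laplacePairing : IsLaplacePairing K U V B (laplacePairing B) where
  symm := laplacePairing_comm B
  split a b c := by
    rw [laplacePairing_apply_mul, LinearMap.convMul_apply_eq_lift, JTcomul_eq_comul]
  unit_unit := by simp [Algebra.TensorProduct.one_def]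
  vu x y := by simp [inclU, inclV]
  uv x y := by simp [inclU, inclV]
  uu x₁ x₂ := by simp [inclU]
  vv y₁ y₂ := by simp [inclV]
  u_one x := by simp [inclU, Algebra.TensorProduct.one_def]
  one_u x := by simp [inclU, Algebra.TensorProduct.one_def]
  one_v y := by simp [inclV, Algebra.TensorProduct.one_def]
  v_one y := by simp [inclV, Algebra.TensorProduct.one_def]

theorem JT.linearMap_ext {M : Type*} [AddCommMonoid M] [Module K M] {f g : JT K U V →ₗ[K] M}
    (one : f 1 = g 1) (genU : ∀ x, f (inclU K U V (ι K x)) = g (inclU K U V (ι K x)))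
    (genV : ∀ y, f (inclV K U V (ι K y)) = g (inclV K U V (ι K y)))
    (mul : ∀ a b, f a = g a → f b = g b → f (a * b) = g (a * b)) : f = g :=
  LinearMap.eq_of_adjoin_eq_top
    (Algebra.TensorProduct.adjoin_image_includeLeft_union_eq_top adjoin_range_ι adjoin_range_ι)
    one (by
      rintro _ (⟨_, ⟨x, rfl⟩, rfl⟩ | ⟨_, ⟨y, rfl⟩, rfl⟩)
      exacts [genU x, genV y])
    mul

theorem comul_inclU_ι (x : U) :
    comul (R := K) (inclU K U V (ι K x)) = inclU K U V (ι K x) ⊗ₜ 1 + 1 ⊗ₜ inclU K U V (ι K x) := by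
  simp [inclU, Algebra.TensorProduct.one_def, add_tmul, add_comm]

theorem comul_inclV_ι (y : V) :
    comul (R := K) (inclV K U V (ι K y)) = inclV K U V (ι K y) ⊗ₜ 1 + 1 ⊗ₜ inclV K U V (ι K y) := by
  simp [inclV, Algebra.TensorProduct.one_def, tmul_add, add_comm]

namespace IsLaplacePairing

variable {K U V B} {L L₁ L₂ : JT K U V →ₗ[K] JT K U V →ₗ[K] K}

theorem apply_mul (hL : IsLaplacePairing K U V B L) (a b c : JT K U V) :
    L a (b * c) = (toConv (L.flip b) * toConv (L.flip c)) a := by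
  rw [hL.split, LinearMap.convMul_apply_eq_lift, JTcomul_eq_comul]

theorem one_left (hL : IsLaplacePairing K U V B L) : L 1 = counit := by
  refine JT.linearMap_ext K U V ?_ (fun x ↦ ?_) (fun y ↦ ?_) (fun b c hb hc ↦ ?_)
  · rw [hL.unit_unit, Bialgebra.counit_one]
  · rw [hL.one_u]
    simp [inclU]
  · rw [hL.one_v]
    simp [inclV]
  · rw [hL.apply_mul, LinearMap.convMul_apply, Bialgebra.comul_one, Algebra.TensorProduct.one_def,
      map_tmul, LinearMap.mul'_apply, Bialgebra.counit_mul]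
    exact congr($hb * $hc)

theorem apply_eq_apply_of_primitive (h₁ : IsLaplacePairing K U V B L₁)
    (h₂ : IsLaplacePairing K U V B L₂) {a : JT K U V} (ha : comul (R := K) a = a ⊗ₜ 1 + 1 ⊗ₜ a)
    (one : L₁ a 1 = L₂ a 1)
    (genU : ∀ x, L₁ a (inclU K U V (ι K x)) = L₂ a (inclU K U V (ι K x)))
    (genV : ∀ y, L₁ a (inclV K U V (ι K y)) = L₂ a (inclV K U V (ι K y))) : L₁ a = L₂ a := by
  refine JT.linearMap_ext K U V one genU genV fun b c hb hc ↦ ?_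
  simp [h₁.apply_mul, h₂.apply_mul, ha, h₁.one_left, h₂.one_left, hb, hc]

theorem unique (h₁ : IsLaplacePairing K U V B L₁) (h₂ : IsLaplacePairing K U V B L₂) :
    L₁ = L₂ := by
  have genU (x : U) : L₁ (inclU K U V (ι K x)) = L₂ (inclU K U V (ι K x)) :=
    h₁.apply_eq_apply_of_primitive h₂ (comul_inclU_ι K U V x) (by rw [h₁.u_one, h₂.u_one])
      (fun _ ↦ by rw [h₁.uu, h₂.uu]) (fun _ ↦ by rw [h₁.uv, h₂.uv])
  have genV (y : V) : L₁ (inclV K U V (ι K y)) = L₂ (inclV K U V (ι K y)) :=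
    h₁.apply_eq_apply_of_primitive h₂ (comul_inclV_ι K U V y) (by rw [h₁.v_one, h₂.v_one])
      (fun _ ↦ by rw [h₁.vu, h₂.vu]) (fun _ ↦ by rw [h₁.vv, h₂.vv])
  refine LinearMap.flip_inj (JT.linearMap_ext K U V ?_ (fun x ↦ ?_) (fun y ↦ ?_)
    (fun b c hb hc ↦ ?_)) <;> refine LinearMap.ext fun a ↦ ?_ <;>
    simp only [LinearMap.flip_apply]
  · rw [h₁.symm, h₂.symm, h₁.one_left, h₂.one_left]
  · rw [h₁.symm, h₂.symm, genU]
  · rw [h₁.symm, h₂.symm, genV]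
  · rw [h₁.apply_mul, h₂.apply_mul, hb, hc]

end IsLaplacePairing

end LaplacePairing

theorem statement0 :
    (∃! Lp : JT K U V →ₗ[K] JT K U V →ₗ[K] K, IsLaplacePairing K U V B Lp) ∧
      ∀ Lp : JT K U V →ₗ[K] JT K U V →ₗ[K] K, IsLaplacePairing K U V B Lp →
        ∀ a b, Lp a b = Lp b a :=
  ⟨⟨TensorAlgebra.laplacePairing B, isLaplacePairing_laplacePairing K U V B,
    fun _ hL ↦ hL.unique (isLaplacePairing_laplacePairing K U V B)⟩, fun _ hL ↦ hL.symm⟩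

end
end

section
/- Let x ∈ U, y, y' ∈ V, and let m, m' ≥ 0 with n = m + m'. Then the unique Laplace pairing on T(U,V) compatible with the duality satisfies (x^{⊗n} | y^{⊗m} ⊗ y'^{⊗m'}) = n! · ⟨x,y⟩^m · ⟨x,y'⟩^{m'}, where x^{⊗n} ∈ U^{⊗n} denotes the n-fold tensor power of x and y^{⊗m} ⊗ y'^{⊗m'} ∈ V^{⊗n} the concatenation of tensor powers of y and y'. -/
open TensorProduct

noncomputable section

variable (K : Type) [Field K] [CharZero K]
variable (U V : Type) [AddCommGroup U] [Module K U] [AddCommGroup V] [Module K V]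

variable (B : U →ₗ[K] V →ₗ[K] K)

/-- The elementary tensor `x₁ ⊗ ⋯ ⊗ xₙ` in the tensor algebra. -/
def elemT {n : ℕ} (x : Fin n → U) : TensorAlgebra K U :=
  (List.ofFn fun i => TensorAlgebra.ι K (x i)).prod

/-!
Since `Δ(xᵏ) = ∑ⱼ C(k,j) xʲ ⊗ xᵏ⁻ʲ` and `(xʲ | y)` vanishes unless `j = 1`, the Laplace rule gives
`(xᵏ⁺¹ | y·c) = (k+1) ⟨x,y⟩ (xᵏ | c)`. Peeling off the `m` factors `y` one at a time produces the
falling factorial `n (n-1) ⋯ (m'+1) ⟨x,y⟩ᵐ`, the `m'` factors `y'` then give `m'! ⟨x,y'⟩ᵐ'`, and the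
two factorial factors multiply to `n!`.
-/

set_option linter.unusedSectionVars false

lemma TAcomul_ι (x : U) :
    TAcomul K U (TensorAlgebra.ι K x) = TensorAlgebra.ι K x ⊗ₜ 1 + 1 ⊗ₜ TensorAlgebra.ι K x := by
  simp [TAcomul, add_comm]

lemma TAcomul_ι_pow (x : U) (n : ℕ) :
    TAcomul K U (TensorAlgebra.ι K x ^ n) = ∑ k ∈ Finset.range (n + 1),
      (n.choose k : K) • ((TensorAlgebra.ι K x ^ k) ⊗ₜ (TensorAlgebra.ι K x ^ (n - k))) := by
  have hcomm : Commute (TensorAlgebra.ι K x ⊗ₜ[K] (1 : TensorAlgebra K U))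
      (1 ⊗ₜ TensorAlgebra.ι K x) := by
    simp [Commute, SemiconjBy, Algebra.TensorProduct.tmul_mul_tmul]
  rw [map_pow, TAcomul_ι, hcomm.add_pow]
  refine Finset.sum_congr rfl fun k _ => ?_
  rw [Algebra.TensorProduct.tmul_pow, Algebra.TensorProduct.tmul_pow,
    Algebra.TensorProduct.tmul_mul_tmul, one_pow, one_pow, one_mul, mul_one,
    ← (Nat.cast_commute _ _).eq, ← nsmul_eq_mul, Nat.cast_smul_eq_nsmul]

lemma inclU_apply (u : TensorAlgebra K U) : inclU K U V u = u ⊗ₜ 1 := rfl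

lemma inclV_apply (v : TensorAlgebra K V) : inclV K U V v = 1 ⊗ₜ v := rfl

lemma inclU_one : inclU K U V 1 = 1 := rfl

lemma inclV_one : inclV K U V 1 = 1 := rfl

lemma inclU_mul (u u' : TensorAlgebra K U) :
    inclU K U V (u * u') = inclU K U V u * inclU K U V u' := by
  simp [inclU_apply, Algebra.TensorProduct.tmul_mul_tmul]

lemma inclV_mul (v v' : TensorAlgebra K V) :
    inclV K U V (v * v') = inclV K U V v * inclV K U V v' := by
  simp [inclV_apply, Algebra.TensorProduct.tmul_mul_tmul]

lemma JTcomul_one : JTcomul K U V 1 = 1 ⊗ₜ 1 := by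
  simp [JTcomul, Algebra.TensorProduct.one_def]

lemma JTcomul_inclU_ι_pow (x : U) (n : ℕ) :
    JTcomul K U V (inclU K U V (TensorAlgebra.ι K x ^ n)) = ∑ k ∈ Finset.range (n + 1),
      (n.choose k : K) •
        (inclU K U V (TensorAlgebra.ι K x ^ k) ⊗ₜ inclU K U V (TensorAlgebra.ι K x ^ (n - k))) := by
  simp only [JTcomul, inclU_apply, LinearMap.coe_comp, LinearEquiv.coe_coe, Function.comp_apply,
    TensorProduct.map_tmul, AlgHom.toLinearMap_apply, TAcomul_ι_pow, map_one,
    TensorProduct.sum_tmul, map_sum, ← TensorProduct.smul_tmul', map_smul,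
    TensorProduct.tensorTensorTensorComm_tmul, Algebra.TensorProduct.one_def]

lemma JTcomul_inclV_ι (y : V) :
    JTcomul K U V (inclV K U V (TensorAlgebra.ι K y))
      = inclV K U V (TensorAlgebra.ι K y) ⊗ₜ 1 + 1 ⊗ₜ inclV K U V (TensorAlgebra.ι K y) := by
  simp [JTcomul, inclV_apply, TAcomul_ι, TensorProduct.tmul_add, Algebra.TensorProduct.one_def]

namespace IsLaplacePairing

variable {K U V B} {Lp : JT K U V →ₗ[K] JT K U V →ₗ[K] K}

lemma apply_mul_of_JTcomul_eq_sum (hLp : IsLaplacePairing K U V B Lp) {ι : Type*}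
    {s : Finset ι} {c : ι → K} {p q : ι → JT K U V} {a : JT K U V}
    (ha : JTcomul K U V a = ∑ i ∈ s, c i • (p i ⊗ₜ q i)) (b d : JT K U V) :
    Lp a (b * d) = ∑ i ∈ s, c i * (Lp (p i) b * Lp (q i) d) := by
  simp [hLp.split, ha, LinearMap.compl₁₂_apply]

lemma apply_mul_of_JTcomul_eq_add (hLp : IsLaplacePairing K U V B Lp) {p₁ q₁ p₂ q₂ a : JT K U V}
    (ha : JTcomul K U V a = p₁ ⊗ₜ q₁ + p₂ ⊗ₜ q₂) (b d : JT K U V) :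
    Lp a (b * d) = Lp p₁ b * Lp q₁ d + Lp p₂ b * Lp q₂ d := by
  simp [hLp.split, ha, LinearMap.compl₁₂_apply]

lemma one_apply_mul (hLp : IsLaplacePairing K U V B Lp) (b d : JT K U V) :
    Lp 1 (b * d) = Lp 1 b * Lp 1 d := by
  simp [hLp.split, JTcomul_one, LinearMap.compl₁₂_apply]

lemma one_inclU_ι_pow (hLp : IsLaplacePairing K U V B Lp) (x : U) (k : ℕ) :
    Lp 1 (inclU K U V (TensorAlgebra.ι K x ^ k)) = if k = 0 then 1 else 0 := by
  induction k with
  | zero => simpa [inclU_one] using hLp.unit_unit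
  | succ k _ =>
    rw [pow_succ', inclU_mul, hLp.one_apply_mul, hLp.one_u, zero_mul, if_neg k.succ_ne_zero]

lemma inclU_ι_pow_inclV_ι (hLp : IsLaplacePairing K U V B Lp) (x : U) (y : V) (j : ℕ) :
    Lp (inclU K U V (TensorAlgebra.ι K x ^ j)) (inclV K U V (TensorAlgebra.ι K y))
      = if j = 1 then B x y else 0 := by
  match j with
  | 0 => simpa [inclU_one] using hLp.one_v y
  | 1 => simpa using hLp.uv x y
  | j + 2 =>
    rw [hLp.symm, pow_succ', inclU_mul, hLp.apply_mul_of_JTcomul_eq_add (JTcomul_inclV_ι K U V y),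
      hLp.one_inclU_ι_pow, hLp.symm _ (inclU K U V _), hLp.one_u]
    simp

lemma inclU_ι_pow_succ_inclV_ι_mul (hLp : IsLaplacePairing K U V B Lp) (x : U) (y : V) (k : ℕ)
    (c : JT K U V) :
    Lp (inclU K U V (TensorAlgebra.ι K x ^ (k + 1))) (inclV K U V (TensorAlgebra.ι K y) * c)
      = (k + 1) * B x y * Lp (inclU K U V (TensorAlgebra.ι K x ^ k)) c := by
  rw [hLp.apply_mul_of_JTcomul_eq_sum (JTcomul_inclU_ι_pow K U V x (k + 1)),
    Finset.sum_eq_single 1]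
  · simp [hLp.uv, mul_assoc]
  · intro j _ hj
    simp [hLp.inclU_ι_pow_inclV_ι, hj]
  · simp

lemma inclU_ι_pow_add_inclV_ι_pow_mul (hLp : IsLaplacePairing K U V B Lp) (x : U) (y : V)
    (m k : ℕ) (c : JT K U V) :
    Lp (inclU K U V (TensorAlgebra.ι K x ^ (m + k))) (inclV K U V (TensorAlgebra.ι K y ^ m) * c)
      = (m + k).descFactorial m * B x y ^ m * Lp (inclU K U V (TensorAlgebra.ι K x ^ k)) c := by
  induction m with
  | zero => simp [inclV_one]
  | succ m ih =>
    rw [pow_succ', inclV_mul, mul_assoc, Nat.add_right_comm,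
      hLp.inclU_ι_pow_succ_inclV_ι_mul, ih, Nat.succ_descFactorial_succ]
    push_cast
    ring

lemma inclU_ι_pow_inclV_ι_pow (hLp : IsLaplacePairing K U V B Lp) (x : U) (y : V) (m : ℕ) :
    Lp (inclU K U V (TensorAlgebra.ι K x ^ m)) (inclV K U V (TensorAlgebra.ι K y ^ m))
      = m.factorial * B x y ^ m := by
  simpa [Nat.descFactorial_self, inclU_one, hLp.unit_unit] using
    hLp.inclU_ι_pow_add_inclV_ι_pow_mul x y m 0 1

end IsLaplacePairing

theorem statement5 (Lp : JT K U V →ₗ[K] JT K U V →ₗ[K] K)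
    (hLp : IsLaplacePairing K U V B Lp) (x : U) (y y' : V) (m m' n : ℕ)
    (hn : n = m + m') :
    Lp (inclU K U V (TensorAlgebra.ι K x ^ n))
        (inclV K U V (TensorAlgebra.ι K y ^ m * TensorAlgebra.ι K y' ^ m')) =
      (n.factorial : K) * B x y ^ m * B x y' ^ m' := by
  have hfac : (m'.factorial * (m + m').descFactorial m : K) = (m + m').factorial := by
    have h := Nat.factorial_mul_descFactorial (m.le_add_right m')
    rw [Nat.add_sub_cancel_left] at h
    exact_mod_cast h
  rw [hn, inclV_mul, hLp.inclU_ι_pow_add_inclV_ι_pow_mul, hLp.inclU_ι_pow_inclV_ι_pow, ← hfac]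
  ring

end
end

section
/- For all a, b, c ∈ T(U,V) the Laplace pairing and the square product satisfy the adjointness identity (a □ b | c) = (a | b □ c). -/
open TensorProduct

noncomputable section

variable (K : Type) [Field K] [CharZero K]
variable (U V : Type) [AddCommGroup U] [Module K U] [AddCommGroup V] [Module K V]

variable (B : U →ₗ[K] V →ₗ[K] K)

/-- Auxiliary map sending `(a₁ ⊗ a₂) ⊗ (b₁ ⊗ b₂)` to `(a₁ | b₁) a₂ · b₂`. -/
def sqAux (Lp : JT K U V →ₗ[K] JT K U V →ₗ[K] K) :
    (JT K U V ⊗[K] JT K U V) ⊗[K] (JT K U V ⊗[K] JT K U V) →ₗ[K] JT K U V :=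
  (TensorProduct.lid K (JT K U V)).toLinearMap ∘ₗ
    TensorProduct.map (TensorProduct.lift Lp)
      (TensorProduct.lift (LinearMap.mul K (JT K U V))) ∘ₗ
    (TensorProduct.tensorTensorTensorComm K (JT K U V) (JT K U V)
      (JT K U V) (JT K U V)).toLinearMap

/-- The square product `a □ b = Σ (a₍₁₎ | b₍₁₎) a₍₂₎ · b₍₂₎` on the joint tensor algebra. -/
def sqProd (Lp : JT K U V →ₗ[K] JT K U V →ₗ[K] K) :
    JT K U V →ₗ[K] JT K U V →ₗ[K] JT K U V :=
  (TensorProduct.curry (sqAux K U V Lp)).compl₁₂ (JTcomul K U V) (JTcomul K U V)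

/-!
Expanding with the Laplace property, both `(a □ b | c)` and `(a | b □ c)` become
`Σ (a₁ | b₁) (a₂ | c₁) (b₂ | c₂)`, except that on the right the tensor factors of `Δb` and `Δc`
appear swapped; cocommutativity of `Δ` removes the swap.
-/

section SquareProduct

open LinearMap (BilinForm)

variable {R M : Type*} [CommSemiring R] [AddCommMonoid M] [Module R M]

def contractFst (P : BilinForm R M) : (M ⊗[R] M) ⊗[R] (M ⊗[R] M) →ₗ[R] M ⊗[R] M :=
  (TensorProduct.lid R (M ⊗[R] M)).toLinearMap ∘ₗ TensorProduct.map (lift P) LinearMap.id ∘ₗ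
    (tensorTensorTensorComm R M M M M).toLinearMap

@[simp]
lemma contractFst_tmul (P : BilinForm R M) (a₁ a₂ b₁ b₂ : M) :
    contractFst P ((a₁ ⊗ₜ a₂) ⊗ₜ (b₁ ⊗ₜ b₂)) = P a₁ b₁ • (a₂ ⊗ₜ b₂) := by
  simp [contractFst]

lemma tmul_contractFst_comm (P : BilinForm R M) (p q r : M ⊗[R] M) :
    P.tmul P (contractFst P (p ⊗ₜ q)) r
      = P.tmul P p (contractFst P (TensorProduct.comm R M M q ⊗ₜ TensorProduct.comm R M M r)) := by
  induction p using TensorProduct.induction_on with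
  | zero => simp
  | add p₁ p₂ h₁ h₂ => simp [add_tmul, h₁, h₂]
  | tmul a₁ a₂ =>
    induction q using TensorProduct.induction_on with
    | zero => simp
    | add q₁ q₂ h₁ h₂ => simp [tmul_add, add_tmul, h₁, h₂]
    | tmul b₁ b₂ =>
      induction r using TensorProduct.induction_on with
      | zero => simp
      | add r₁ r₂ h₁ h₂ => simp only [tmul_add, map_add, h₁, h₂]
      | tmul c₁ c₂ => simp [smul_tmul', mul_comm, mul_left_comm]

lemma lift_mul_compl₁₂_flip (P : BilinForm R M) (b c : M) :
    lift ((LinearMap.mul R R).compl₁₂ (LinearMap.flip P b) (LinearMap.flip P c))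
      = LinearMap.flip (P.tmul P) (b ⊗ₜ c) := by
  ext x y
  simp [mul_comm]

variable {A : Type*} [Semiring A] [Algebra R A]

def squareProduct (P : BilinForm R A) (Δ : A →ₗ[R] A ⊗[R] A) : A →ₗ[R] A →ₗ[R] A :=
  (curry (lift (LinearMap.mul R A) ∘ₗ contractFst P)).compl₁₂ Δ Δ

lemma apply_lift_mul_of_split {P : BilinForm R A} {Δ : A →ₗ[R] A ⊗[R] A}
    (hsplit : ∀ a b c, P a (b * c) = P.tmul P (Δ a) (b ⊗ₜ c)) (a : A) (t : A ⊗[R] A) :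
    P a (lift (LinearMap.mul R A) t) = P.tmul P (Δ a) t := by
  induction t using TensorProduct.induction_on with
  | zero => simp
  | add s t hs ht => simp [hs, ht]
  | tmul b c => simp [hsplit]

theorem squareProduct_adjoint {P : BilinForm R A} {Δ : A →ₗ[R] A ⊗[R] A}
    (hsymm : ∀ a b, P a b = P b a)
    (hcocomm : (TensorProduct.comm R A A).toLinearMap ∘ₗ Δ = Δ)
    (hsplit : ∀ a b c, P a (b * c) = P.tmul P (Δ a) (b ⊗ₜ c)) (a b c : A) :
    P (squareProduct P Δ a b) c = P a (squareProduct P Δ b c) := by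
  have hΔ (x : A) : TensorProduct.comm R A A (Δ x) = Δ x := LinearMap.congr_fun hcocomm x
  have hsymm₂ : (P.tmul P).IsSymm := LinearMap.IsSymm.tmul ⟨hsymm⟩ ⟨hsymm⟩
  calc P (squareProduct P Δ a b) c
      = P.tmul P (Δ c) (contractFst P (Δ a ⊗ₜ Δ b)) := by
        rw [hsymm, ← apply_lift_mul_of_split hsplit]; rfl
    _ = P.tmul P (contractFst P (Δ a ⊗ₜ Δ b)) (Δ c) := hsymm₂.eq _ _
    _ = P.tmul P (Δ a) (contractFst P (Δ b ⊗ₜ Δ c)) := by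
        rw [tmul_contractFst_comm, hΔ, hΔ]
    _ = P a (squareProduct P Δ b c) := (apply_lift_mul_of_split hsplit _ _).symm

end SquareProduct

lemma comm_comp_tensorTensorTensorComm {R M N P Q : Type*} [CommSemiring R]
    [AddCommMonoid M] [AddCommMonoid N] [AddCommMonoid P] [AddCommMonoid Q]
    [Module R M] [Module R N] [Module R P] [Module R Q] :
    (TensorProduct.comm R (M ⊗[R] P) (N ⊗[R] Q)).toLinearMap
        ∘ₗ (tensorTensorTensorComm R M N P Q).toLinearMap
      = (tensorTensorTensorComm R N M Q P).toLinearMap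
        ∘ₗ TensorProduct.map (TensorProduct.comm R M N) (TensorProduct.comm R P Q) := by
  ext
  rfl

omit [CharZero K] in
lemma TAcomul_cocomm :
    (Algebra.TensorProduct.comm K _ _).toAlgHom.comp (TAcomul K U) = TAcomul K U := by
  ext x
  simp [TAcomul, add_comm]

omit [CharZero K] in
lemma JTcomul_cocomm :
    (TensorProduct.comm K (JT K U V) (JT K U V)).toLinearMap ∘ₗ JTcomul K U V = JTcomul K U V := by
  have hU := congrArg AlgHom.toLinearMap (TAcomul_cocomm K U)
  have hV := congrArg AlgHom.toLinearMap (TAcomul_cocomm K V)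
  rw [JTcomul, ← LinearMap.comp_assoc, comm_comp_tensorTensorTensorComm, LinearMap.comp_assoc,
    ← TensorProduct.map_comp]
  exact congrArg _ (congrArg₂ _ hU hV)

omit [CharZero K] in
lemma sqProd_eq_squareProduct (Lp : JT K U V →ₗ[K] JT K U V →ₗ[K] K) :
    sqProd K U V Lp = squareProduct Lp (JTcomul K U V) := by
  suffices sqAux K U V Lp = lift (LinearMap.mul K (JT K U V)) ∘ₗ contractFst Lp by
    rw [sqProd, squareProduct, this]
  ext
  simp [sqAux]

theorem statement7 (Lp : JT K U V →ₗ[K] JT K U V →ₗ[K] K)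
    (hLp : IsLaplacePairing K U V B Lp) (a b c : JT K U V) :
    Lp (sqProd K U V Lp a b) c = Lp a (sqProd K U V Lp b c) := by
  rw [sqProd_eq_squareProduct]
  refine squareProduct_adjoint hLp.symm (JTcomul_cocomm K U V) (fun x y z => ?_) a b c
  rw [hLp.split, lift_mul_compl₁₂_flip, LinearMap.flip_apply]

end
end
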